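/- arXiv:2112.04437 — 5 statements merged into one kernel-verified Lean document; each statement's English description precedes it below -/
import Mathlib

section
/- Let x, y : [0,∞) → ℝ be nonnegative C¹ functions satisfying x' ≤ y, x(0) = 1, y' ≤ c·e^{-δt}·x, y(0) = 0, for constants c, δ > 0. Then there exists C = C(c, δ) such that x(t) ≤ 1 + C·t and y(t) ≤ C·min(1, t) for all t ≥ 0. -/
/-!
With `K = c/δ`, the quantity `u = y + K e^{-δt} x` satisfies `u' ≤ K e^{-δt} u` (the term
`-Kδ e^{-δt} x` from differentiating the weight absorbs the forcing `y' ≤ c e^{-δt} x`).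
Since `∫₀^∞ K e^{-δs} ds = c/δ²`, Grönwall's inequality bounds `u`, hence `y`, by
`C₀ = (c/δ) e^{c/δ²}`. Then `x' ≤ y ≤ C₀` gives `x ≤ 1 + C₀ t`, so on `[0, 1]` we get
`y' ≤ c (1 + C₀)` and `y ≤ c (1 + C₀) t`.
-/

open Set Real

theorem Convex.antitoneOn_of_hasDerivWithinAt_nonpos {s : Set ℝ} (hs : Convex ℝ s)
    {f f' : ℝ → ℝ} (hf : ∀ t ∈ s, HasDerivWithinAt f (f' t) s t)
    (hf' : ∀ t ∈ interior s, f' t ≤ 0) : AntitoneOn f s :=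
  _root_.antitoneOn_of_hasDerivWithinAt_nonpos hs (fun t ht => (hf t ht).continuousWithinAt)
    (fun t ht => (hf t (interior_subset ht)).mono interior_subset) hf'

theorem Convex.sub_le_mul_sub_of_hasDerivWithinAt_le {s : Set ℝ} (hs : Convex ℝ s)
    {f f' : ℝ → ℝ} {B : ℝ} (hf : ∀ t ∈ s, HasDerivWithinAt f (f' t) s t)
    (hB : ∀ t ∈ interior s, f' t ≤ B) {a b : ℝ} (ha : a ∈ s) (hb : b ∈ s) (hab : a ≤ b) :
    f b - f a ≤ B * (b - a) := by
  have hanti : AntitoneOn (fun t => f t - B * t) s :=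
    hs.antitoneOn_of_hasDerivWithinAt_nonpos
      (fun t ht => (hf t ht).sub ((hasDerivAt_id t).const_mul B).hasDerivWithinAt)
      (fun t ht => by simpa using hB t ht)
  have := hanti ha hb hab
  linarith

theorem Convex.le_mul_exp_sub_of_hasDerivWithinAt_le_mul {s : Set ℝ} (hs : Convex ℝ s)
    {u u' A a : ℝ → ℝ} (hu : ∀ t ∈ s, HasDerivWithinAt u (u' t) s t)
    (hA : ∀ t ∈ s, HasDerivWithinAt A (a t) s t) (hua : ∀ t ∈ interior s, u' t ≤ a t * u t)
    {t₀ t : ℝ} (ht₀ : t₀ ∈ s) (ht : t ∈ s) (hle : t₀ ≤ t) :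
    u t ≤ u t₀ * exp (A t - A t₀) := by
  have hanti : AntitoneOn (fun t => u t * exp (-A t)) s := by
    refine hs.antitoneOn_of_hasDerivWithinAt_nonpos
      (fun t ht => (hu t ht).mul (hA t ht).neg.exp) fun t ht => ?_
    have := mul_le_mul_of_nonneg_right (hua t ht) (exp_pos (-A t)).le
    simp only [Pi.neg_apply]
    linarith
  have := mul_le_mul_of_nonneg_right (hanti ht₀ ht hle) (exp_pos (A t)).le
  rwa [mul_assoc, ← exp_add, neg_add_cancel, exp_zero, mul_one, mul_assoc, ← exp_add,
    neg_add_eq_sub] at this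

theorem hasDerivAt_exp_neg_mul (δ t : ℝ) :
    HasDerivAt (fun s => exp (-δ * s)) (-δ * exp (-δ * t)) t := by
  simpa [mul_comm] using ((hasDerivAt_id t).const_mul (-δ)).exp

theorem forceless_kinetic_le {c δ : ℝ} (hc : 0 ≤ c) (hδ : 0 < δ) {x y x' y' : ℝ → ℝ}
    (hxd : ∀ t ∈ Ici (0:ℝ), HasDerivWithinAt x (x' t) (Ici 0) t)
    (hyd : ∀ t ∈ Ici (0:ℝ), HasDerivWithinAt y (y' t) (Ici 0) t)
    (hxnn : ∀ t ∈ Ici (0:ℝ), 0 ≤ x t) (hx0 : x 0 = 1) (hy0 : y 0 = 0)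
    (hx' : ∀ t ∈ Ici (0:ℝ), x' t ≤ y t)
    (hy' : ∀ t ∈ Ici (0:ℝ), y' t ≤ c * exp (-δ * t) * x t) {t : ℝ} (ht : 0 ≤ t) :
    y t ≤ c / δ * exp (c / δ ^ 2) := by
  set K := c / δ with hK
  have hK₀ : 0 ≤ K := div_nonneg hc hδ.le
  have hKδ : K * δ = c := div_mul_cancel₀ c hδ.ne'
  have hu : ∀ t ∈ Ici (0:ℝ), HasDerivWithinAt (fun t => y t + K * (exp (-δ * t) * x t))
      (y' t + K * (-δ * exp (-δ * t) * x t + exp (-δ * t) * x' t)) (Ici 0) t := fun t ht =>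
    (hyd t ht).add (((hasDerivAt_exp_neg_mul δ t).hasDerivWithinAt.mul (hxd t ht)).const_mul K)
  have hA : ∀ t ∈ Ici (0:ℝ), HasDerivWithinAt (fun t => -(K / δ) * exp (-δ * t))
      (K * exp (-δ * t)) (Ici 0) t := fun t _ =>
    ((hasDerivAt_exp_neg_mul δ t).const_mul (-(K / δ))).hasDerivWithinAt.congr_deriv
      (by field_simp)
  have hua : ∀ t ∈ interior (Ici (0:ℝ)),
      y' t + K * (-δ * exp (-δ * t) * x t + exp (-δ * t) * x' t) ≤
        K * exp (-δ * t) * (y t + K * (exp (-δ * t) * x t)) := fun t ht => by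
    have ht : t ∈ Ici (0:ℝ) := interior_subset ht
    have hx't := mul_le_mul_of_nonneg_left (hx' t ht) (mul_nonneg hK₀ (exp_pos (-δ * t)).le)
    have : 0 ≤ (K * exp (-δ * t)) ^ 2 * x t := mul_nonneg (sq_nonneg _) (hxnn t ht)
    rw [← hKδ] at hy'
    nlinarith [hy' t ht]
  have hgron := (convex_Ici (0:ℝ)).le_mul_exp_sub_of_hasDerivWithinAt_le_mul hu hA hua
    self_mem_Ici (mem_Ici.2 ht) ht
  have hexp : -(K / δ) * exp (-δ * t) - -(K / δ) * exp (-δ * 0) ≤ K / δ := by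
    have : 0 ≤ K / δ * exp (-δ * t) := by positivity
    rw [mul_zero, exp_zero]
    linarith
  have hxt : 0 ≤ K * (exp (-δ * t) * x t) := by have := hxnn t ht; positivity
  calc y t ≤ y t + K * (exp (-δ * t) * x t) := le_add_of_nonneg_right hxt
    _ ≤ (y 0 + K * (exp (-δ * 0) * x 0)) * exp (K / δ) :=
      hgron.trans (mul_le_mul_of_nonneg_left (exp_le_exp.2 hexp) (by simp [hx0, hy0, hK₀]))
    _ = K * exp (c / δ ^ 2) := by rw [hK, div_div, ← sq]; simp [hx0, hy0]

theorem forceless_kinetic_le_mul {c δ C : ℝ} (hc : 0 ≤ c) (hδ : 0 ≤ δ) (hC : 0 ≤ C)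
    {x y y' : ℝ → ℝ} (hyd : ∀ t ∈ Ici (0:ℝ), HasDerivWithinAt y (y' t) (Ici 0) t)
    (hxnn : ∀ t ∈ Ici (0:ℝ), 0 ≤ x t) (hx : ∀ t ∈ Ici (0:ℝ), x t ≤ 1 + C * t) (hy0 : y 0 = 0)
    (hy' : ∀ t ∈ Ici (0:ℝ), y' t ≤ c * exp (-δ * t) * x t) {t : ℝ} (ht : t ∈ Icc (0:ℝ) 1) :
    y t ≤ c * (1 + C) * t := by
  have hy'_le : ∀ s ∈ interior (Icc (0:ℝ) 1), y' s ≤ c * (1 + C) := by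
    rw [interior_Icc]
    rintro s ⟨hs0, hs1⟩
    have hs : s ∈ Ici (0:ℝ) := hs0.le
    have hexp : exp (-δ * s) ≤ 1 := exp_le_one_iff.2 (by nlinarith)
    have hxs : x s ≤ 1 + C := (hx s hs).trans (by nlinarith)
    calc y' s ≤ c * exp (-δ * s) * x s := hy' s hs
      _ ≤ c * 1 * (1 + C) := by gcongr; exact hxnn s hs
      _ = c * (1 + C) := by ring
  have := (convex_Icc (0:ℝ) 1).sub_le_mul_sub_of_hasDerivWithinAt_le
    (fun s hs => (hyd s hs.1).mono Icc_subset_Ici_self) hy'_le (left_mem_Icc.2 zero_le_one) ht ht.1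
  simpa [hy0] using this

theorem stmt_2_general (c δ : ℝ) (hc : 0 < c) (hδ : 0 < δ) (x y x' y' : ℝ → ℝ)
    (hxd : ∀ t ∈ Ici (0:ℝ), HasDerivWithinAt x (x' t) (Ici 0) t)
    (hyd : ∀ t ∈ Ici (0:ℝ), HasDerivWithinAt y (y' t) (Ici 0) t)
    (hxnn : ∀ t ∈ Ici (0:ℝ), 0 ≤ x t)
    (hx0 : x 0 = 1) (hy0 : y 0 = 0)
    (hx' : ∀ t ∈ Ici (0:ℝ), x' t ≤ y t)
    (hy' : ∀ t ∈ Ici (0:ℝ), y' t ≤ c * Real.exp (-δ * t) * x t) :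
    ∃ C : ℝ, 0 < C ∧ ∀ t ∈ Ici (0:ℝ), x t ≤ 1 + C * t ∧ y t ≤ C * min 1 t := by
  set C₀ := c / δ * exp (c / δ ^ 2)
  have hC₀ : 0 < C₀ := by positivity
  have hy_le : ∀ t ∈ Ici (0:ℝ), y t ≤ C₀ := fun t ht =>
    forceless_kinetic_le hc.le hδ hxd hyd hxnn hx0 hy0 hx' hy' ht
  have hx_le : ∀ t ∈ Ici (0:ℝ), x t ≤ 1 + C₀ * t := fun t ht => by
    have := (convex_Ici (0:ℝ)).sub_le_mul_sub_of_hasDerivWithinAt_le hxd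
      (fun s hs => (hx' s (interior_subset hs)).trans (hy_le s (interior_subset hs)))
      self_mem_Ici ht ht
    rw [hx0, sub_zero] at this
    linarith
  refine ⟨max C₀ (c * (1 + C₀)), lt_max_of_lt_left hC₀, fun t ht => ⟨?_, ?_⟩⟩
  · exact (hx_le t ht).trans (by gcongr; exact le_max_left _ _)
  · rcases le_total t 1 with h1 | h1
    · rw [min_eq_right h1]
      exact (forceless_kinetic_le_mul hc.le hδ.le hC₀.le hyd hxnn hx_le hy0 hy' ⟨ht, h1⟩).trans
        (by gcongr; exact le_max_right _ _)
    · rw [min_eq_left h1, mul_one]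
      exact (hy_le t ht).trans (le_max_left _ _)

theorem stmt_2 (c δ : ℝ) (hc : 0 < c) (hδ : 0 < δ) (x y x' y' : ℝ → ℝ)
    (hxd : ∀ t ∈ Ici (0:ℝ), HasDerivWithinAt x (x' t) (Ici 0) t)
    (hyd : ∀ t ∈ Ici (0:ℝ), HasDerivWithinAt y (y' t) (Ici 0) t)
    (hx'c : ContinuousOn x' (Ici 0)) (hy'c : ContinuousOn y' (Ici 0))
    (hxnn : ∀ t ∈ Ici (0:ℝ), 0 ≤ x t) (hynn : ∀ t ∈ Ici (0:ℝ), 0 ≤ y t)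
    (hx0 : x 0 = 1) (hy0 : y 0 = 0)
    (hx' : ∀ t ∈ Ici (0:ℝ), x' t ≤ y t)
    (hy' : ∀ t ∈ Ici (0:ℝ), y' t ≤ c * Real.exp (-δ * t) * x t) :
    ∃ C : ℝ, 0 < C ∧ ∀ t ∈ Ici (0:ℝ), x t ≤ 1 + C * t ∧ y t ≤ C * min 1 t :=
  stmt_2_general c δ hc hδ x y x' y' hxd hyd hxnn hx0 hy0 hx' hy'
end

section
/- Let x, y : [0,∞) → ℝ be nonnegative C¹ functions with x' ≤ y, y' ≤ c·e^{-δt}·x, x(0)=1, y(0)=0, c, δ > 0. Set ε = δ²/4. Then ε·x(t)² + y(t)² ≤ ε·exp(√ε·t + c/(√ε·δ)) for all t ≥ 0; in particular x(t) ≤ C·e^{δt/2} for some constant C depending on c, δ. -/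
/-!
With `s = √ε`, the energy `E = s²x² + y²` satisfies
`E' ≤ 2xy (s² + c e^{-δt}) ≤ (s + (c/s) e^{-δt}) E` by AM-GM, so `E · exp (-Φ)` is antitone for
a primitive `Φ` of the rate; since `Φ t - Φ 0 ≤ s t + c / (s δ)`, Grönwall gives the energy bound.
Taking `s = δ/2`, `x ≤ √(E/s²)` grows at most like `e^{δt/4} ≤ e^{δt/2}`.
-/

open Set Real

section Gronwall

variable {D : Set ℝ} {f f' Φ g : ℝ → ℝ}

theorem antitoneOn_mul_exp_neg_of_deriv_le_mul (hD : Convex ℝ D)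
    (hf : ∀ t ∈ D, HasDerivWithinAt f (f' t) D t) (hΦ : ∀ t ∈ D, HasDerivWithinAt Φ (g t) D t)
    (hle : ∀ t ∈ D, f' t ≤ g t * f t) :
    AntitoneOn (fun t => f t * exp (-Φ t)) D := by
  have hF : ∀ t ∈ D, HasDerivWithinAt (fun t => f t * exp (-Φ t))
      (exp (-Φ t) * (f' t - g t * f t)) D t := fun t ht => by
    refine ((hf t ht).mul (hΦ t ht).neg.exp).congr_deriv ?_
    simp only [Pi.neg_apply]; ring
  refine antitoneOn_of_hasDerivWithinAt_nonpos hD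
    (fun t ht => (hF t ht).continuousWithinAt)
    (fun t ht => (hF t (interior_subset ht)).mono interior_subset)
    (fun t ht => ?_)
  have := hle t (interior_subset ht)
  exact mul_nonpos_of_nonneg_of_nonpos (exp_pos _).le (by linarith)

theorem le_mul_exp_sub_of_deriv_le_mul (hD : Convex ℝ D)
    (hf : ∀ t ∈ D, HasDerivWithinAt f (f' t) D t) (hΦ : ∀ t ∈ D, HasDerivWithinAt Φ (g t) D t)
    (hle : ∀ t ∈ D, f' t ≤ g t * f t) {a t : ℝ} (ha : a ∈ D) (ht : t ∈ D) (hat : a ≤ t) :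
    f t ≤ f a * exp (Φ t - Φ a) := by
  have h := antitoneOn_mul_exp_neg_of_deriv_le_mul hD hf hΦ hle ha ht hat
  calc f t = f t * exp (-Φ t) * exp (Φ t) := by rw [mul_assoc, ← exp_add]; simp
    _ ≤ f a * exp (-Φ a) * exp (Φ t) := by gcongr
    _ = f a * exp (Φ t - Φ a) := by rw [mul_assoc, ← exp_add]; ring_nf

end Gronwall

theorem energy_deriv_le {s k x y x' y' : ℝ} (hs : 0 < s) (hk : 0 ≤ k) (hx : 0 ≤ x) (hy : 0 ≤ y)
    (hx' : x' ≤ y) (hy' : y' ≤ k * x) :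
    s ^ 2 * (2 * x * x') + 2 * y * y' ≤ (s + k / s) * (s ^ 2 * x ^ 2 + y ^ 2) := by
  have hxy : 2 * x * y * (s ^ 2 + k) ≤ (s + k / s) * (s ^ 2 * x ^ 2 + y ^ 2) := by
    rw [show s + k / s = (s ^ 2 + k) / s by field_simp, div_mul_eq_mul_div, le_div_iff₀ hs]
    nlinarith [mul_nonneg (add_nonneg (sq_nonneg s) hk) (sq_nonneg (s * x - y))]
  calc s ^ 2 * (2 * x * x') + 2 * y * y'
      ≤ s ^ 2 * (2 * x * y) + 2 * y * (k * x) := by gcongr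
    _ = 2 * x * y * (s ^ 2 + k) := by ring
    _ ≤ _ := hxy

theorem hasDerivAt_mul_sub_mul_exp_neg (s K δ t : ℝ) :
    HasDerivAt (fun t => s * t - K * exp (-δ * t)) (s + K * δ * exp (-δ * t)) t := by
  refine (((hasDerivAt_id t).const_mul s).sub
    (((hasDerivAt_id t).const_mul (-δ)).exp.const_mul K)).congr_deriv ?_
  simp only [id]; ring

theorem le_exp_half_of_sq_le_exp {x a : ℝ} (hx : 0 ≤ x) (h : x ^ 2 ≤ exp a) : x ≤ exp (a / 2) := by
  rwa [← pow_le_pow_iff_left₀ hx (exp_pos _).le two_ne_zero, ← exp_nat_mul, Nat.cast_ofNat,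
    mul_div_cancel₀ _ two_ne_zero]

theorem energy_le_of_odi {c δ s : ℝ} (hc : 0 ≤ c) (hδ : 0 < δ) (hs : 0 < s)
    {x y x' y' : ℝ → ℝ}
    (hxd : ∀ t ∈ Ici (0:ℝ), HasDerivWithinAt x (x' t) (Ici 0) t)
    (hyd : ∀ t ∈ Ici (0:ℝ), HasDerivWithinAt y (y' t) (Ici 0) t)
    (hxnn : ∀ t ∈ Ici (0:ℝ), 0 ≤ x t) (hynn : ∀ t ∈ Ici (0:ℝ), 0 ≤ y t)
    (hx0 : x 0 = 1) (hy0 : y 0 = 0)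
    (hx' : ∀ t ∈ Ici (0:ℝ), x' t ≤ y t)
    (hy' : ∀ t ∈ Ici (0:ℝ), y' t ≤ c * exp (-δ * t) * x t)
    {t : ℝ} (ht : 0 ≤ t) :
    s ^ 2 * x t ^ 2 + y t ^ 2 ≤ s ^ 2 * exp (s * t + c / (s * δ)) := by
  set K := c / (s * δ)
  have hE : ∀ t ∈ Ici (0:ℝ), HasDerivWithinAt (fun t => s ^ 2 * x t ^ 2 + y t ^ 2)
      (s ^ 2 * (2 * x t * x' t) + 2 * y t * y' t) (Ici 0) t := fun t ht =>
    ((((hxd t ht).pow 2).const_mul (s ^ 2)).add ((hyd t ht).pow 2)).congr_deriv (by ring)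
  -- `s * t - K * exp (-δ * t)` is a primitive of the Grönwall rate `s + (c / s) * exp (-δ * t)`
  have hE_le : ∀ t ∈ Ici (0:ℝ), s ^ 2 * (2 * x t * x' t) + 2 * y t * y' t ≤
      (s + K * δ * exp (-δ * t)) * (s ^ 2 * x t ^ 2 + y t ^ 2) := fun t ht => by
    convert energy_deriv_le hs (by positivity) (hxnn t ht) (hynn t ht) (hx' t ht) (hy' t ht)
      using 2
    simp only [K]
    field_simp
  calc _ ≤ (s ^ 2 * x 0 ^ 2 + y 0 ^ 2) *
        exp ((s * t - K * exp (-δ * t)) - (s * 0 - K * exp (-δ * 0))) :=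
      le_mul_exp_sub_of_deriv_le_mul (convex_Ici 0) hE
        (fun t _ => (hasDerivAt_mul_sub_mul_exp_neg s K δ t).hasDerivWithinAt) hE_le
        self_mem_Ici ht ht
    _ ≤ s ^ 2 * exp (s * t + K) := by
      simp only [hx0, hy0, mul_zero, exp_zero]
      have : 0 ≤ K * exp (-δ * t) := by positivity
      gcongr
      · norm_num
      · linarith

theorem stmt_3_general (c δ : ℝ) (hc : 0 < c) (hδ : 0 < δ) (x y x' y' : ℝ → ℝ)
    (hxd : ∀ t ∈ Ici (0:ℝ), HasDerivWithinAt x (x' t) (Ici 0) t)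
    (hyd : ∀ t ∈ Ici (0:ℝ), HasDerivWithinAt y (y' t) (Ici 0) t)
    (hxnn : ∀ t ∈ Ici (0:ℝ), 0 ≤ x t) (hynn : ∀ t ∈ Ici (0:ℝ), 0 ≤ y t)
    (hx0 : x 0 = 1) (hy0 : y 0 = 0)
    (hx' : ∀ t ∈ Ici (0:ℝ), x' t ≤ y t)
    (hy' : ∀ t ∈ Ici (0:ℝ), y' t ≤ c * Real.exp (-δ * t) * x t) :
    (∀ t ∈ Ici (0:ℝ),
      (δ ^ 2 / 4) * (x t) ^ 2 + (y t) ^ 2 ≤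
        (δ ^ 2 / 4) * Real.exp (Real.sqrt (δ ^ 2 / 4) * t + c / (Real.sqrt (δ ^ 2 / 4) * δ))) ∧
    ∃ C : ℝ, 0 < C ∧ ∀ t ∈ Ici (0:ℝ), x t ≤ C * Real.exp (δ * t / 2) := by
  have hε : δ ^ 2 / 4 = (δ / 2) ^ 2 := by ring
  rw [hε, sqrt_sq (by positivity)]
  have energy := fun t (ht : t ∈ Ici (0:ℝ)) => energy_le_of_odi (s := δ / 2) hc.le hδ
    (by positivity) hxd hyd hxnn hynn hx0 hy0 hx' hy' ht
  refine ⟨energy, exp (c / (δ / 2 * δ) / 2), exp_pos _, fun t ht => ?_⟩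
  have hx2 : x t ^ 2 ≤ exp (δ / 2 * t + c / (δ / 2 * δ)) := by
    refine le_of_mul_le_mul_left ?_ (by positivity : (0:ℝ) < (δ / 2) ^ 2)
    linarith [energy t ht, sq_nonneg (y t)]
  calc x t ≤ exp ((δ / 2 * t + c / (δ / 2 * δ)) / 2) := le_exp_half_of_sq_le_exp (hxnn t ht) hx2
    _ ≤ exp (c / (δ / 2 * δ) / 2) * exp (δ * t / 2) := by
      rw [← exp_add]
      gcongr
      linarith [mul_nonneg hδ.le ht]

theorem stmt_3 (c δ : ℝ) (hc : 0 < c) (hδ : 0 < δ) (x y x' y' : ℝ → ℝ)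
    (hxd : ∀ t ∈ Ici (0:ℝ), HasDerivWithinAt x (x' t) (Ici 0) t)
    (hyd : ∀ t ∈ Ici (0:ℝ), HasDerivWithinAt y (y' t) (Ici 0) t)
    (hx'c : ContinuousOn x' (Ici 0)) (hy'c : ContinuousOn y' (Ici 0))
    (hxnn : ∀ t ∈ Ici (0:ℝ), 0 ≤ x t) (hynn : ∀ t ∈ Ici (0:ℝ), 0 ≤ y t)
    (hx0 : x 0 = 1) (hy0 : y 0 = 0)
    (hx' : ∀ t ∈ Ici (0:ℝ), x' t ≤ y t)
    (hy' : ∀ t ∈ Ici (0:ℝ), y' t ≤ c * Real.exp (-δ * t) * x t) :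
    (∀ t ∈ Ici (0:ℝ),
      (δ ^ 2 / 4) * (x t) ^ 2 + (y t) ^ 2 ≤
        (δ ^ 2 / 4) * Real.exp (Real.sqrt (δ ^ 2 / 4) * t + c / (Real.sqrt (δ ^ 2 / 4) * δ))) ∧
    ∃ C : ℝ, 0 < C ∧ ∀ t ∈ Ici (0:ℝ), x t ≤ C * Real.exp (δ * t / 2) :=
  stmt_3_general c δ hc hδ x y x' y' hxd hyd hxnn hynn hx0 hy0 hx' hy'
end

section
/- Let x, y, z : [0,∞) → ℝ be nonnegative C¹ functions satisfying x' ≤ y, y' ≤ c·e^{-δt}(x + y) + c·z, z' ≤ c·e^{-δt}·x, with x(0)=1, y(0)=0, z(0)=0, for constants c, δ > 0. Then there exists C = C(c, δ) such that x(t) ≤ 1 + C·t², y(t) ≤ C·t, and z(t) ≤ C·min(1, t) for all t ≥ 0. -/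
open Set Filter Topology Real

/-!
The system is cooperative: each right-hand side is nondecreasing in the other unknowns. So by
Kamke's comparison principle `(x, y, z)` stays below any strict supersolution with larger initial
data. With `F t = exp (2c(c+1) ∫₀ᵗ e^{-δs} (1+s)² ds)`, the triple
`((2c+1)(1+t)² F, (2c+1)(1+t) F, F)` is one, and `F` is bounded because `e^{-δs} (1+s)²` is
integrable. This gives `x ≲ (1+t)²`, `y ≲ 1+t`, `z ≲ 1`; feeding these bounds back into the
inequalities on `[0, 1]` gives `y, z ≲ t` there, and integrating `x' ≤ y` gives
`x ≤ 1 + C t²`.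
-/

theorem HasDerivWithinAt.eventually_nhdsGT_lt {f : ℝ → ℝ} {f' x : ℝ}
    (hf : HasDerivWithinAt f f' (Ioi x) x) (hf' : 0 < f') : ∀ᶠ z in 𝓝[>] x, f x < f z := by
  filter_upwards [(hasDerivWithinAt_iff_tendsto_slope' (lt_irrefl x)).1 hf (Ioi_mem_nhds hf'),
    self_mem_nhdsWithin] with z hslope hxz
  exact (slope_pos_iff hxz).1 hslope

theorem image_le_of_deriv_lt_deriv_boundary_of_finite {ι : Type*} [Finite ι]
    {u v u' v' : ι → ℝ → ℝ} {a : ℝ}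
    (hu : ∀ i, ∀ t ∈ Ici a, HasDerivWithinAt (u i) (u' i t) (Ici a) t)
    (hv : ∀ i, ∀ t ∈ Ici a, HasDerivWithinAt (v i) (v' i t) (Ici a) t)
    (ha : ∀ i, u i a ≤ v i a)
    (bound : ∀ t ∈ Ici a, (∀ j, u j t ≤ v j t) → ∀ i, u i t = v i t →
      u' i t < v' i t) :
    ∀ t ∈ Ici a, ∀ i, u i t ≤ v i t := by
  intro t ht
  have hU : ContinuousOn (fun r i => u i r) (Icc a t) := continuousOn_pi.2 fun i r hr =>
    (hu i r hr.1).continuousWithinAt.mono Icc_subset_Ici_self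
  have hV : ContinuousOn (fun r i => v i r) (Icc a t) := continuousOn_pi.2 fun i r hr =>
    (hv i r hr.1).continuousWithinAt.mono Icc_subset_Ici_self
  have hclosed : IsClosed ({r | (fun i => u i r) ≤ fun i => v i r} ∩ Icc a t) := by
    rw [inter_comm]
    exact isClosed_Icc.isClosed_le hU hV
  refine hclosed.Icc_subset_of_forall_mem_nhdsWithin ha ?_ ⟨ht, le_rfl⟩
  rintro r ⟨hr, hra, -⟩
  have hsub : Ioi r ⊆ Ici a := Ioi_subset_Ici hra
  refine eventually_all.2 fun i => ?_
  rcases (hr i).lt_or_eq with hlt | heq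
  · filter_upwards [nhdsWithin_mono r hsub ((hu i r hra).continuousWithinAt.eventually_lt
      (hv i r hra).continuousWithinAt hlt)] with z hz
    exact hz.le
  · have hpos : 0 < v' i r - u' i r := sub_pos.2 (bound r hra hr i heq)
    filter_upwards [(((hv i r hra).sub (hu i r hra)).mono hsub).eventually_nhdsGT_lt hpos]
      with z hz
    simp only [Pi.sub_apply] at hz heq
    linarith

theorem le_of_hasDerivWithinAt_Ici_of_deriv_le {f f' B B' : ℝ → ℝ} {a t : ℝ}
    (hf : ∀ s ∈ Ici a, HasDerivWithinAt f (f' s) (Ici a) s) (hB : ∀ s, HasDerivAt B (B' s) s)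
    (ha : f a ≤ B a) (bound : ∀ s ∈ Ico a t, f' s ≤ B' s) (ht : a ≤ t) : f t ≤ B t :=
  image_le_of_deriv_right_le_deriv_boundary
    (fun s hs => (hf s hs.1).continuousWithinAt.mono Icc_subset_Ici_self)
    (fun s hs => (hf s hs.1).mono (Ici_subset_Ici.2 hs.1)) ha
    (fun s _ => (hB s).continuousAt.continuousWithinAt) (fun s _ => (hB s).hasDerivWithinAt)
    bound ⟨ht, le_rfl⟩

noncomputable def expSqPrimitive (δ t : ℝ) : ℝ :=
  -exp (-δ * t) * ((δ * (1 + t) + 1) ^ 2 + 1) / δ ^ 3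

theorem hasDerivAt_expSqPrimitive {δ : ℝ} (hδ : δ ≠ 0) (t : ℝ) :
    HasDerivAt (expSqPrimitive δ) (exp (-δ * t) * (1 + t) ^ 2) t := by
  have hexp : HasDerivAt (fun s => -exp (-δ * s)) (δ * exp (-δ * t)) t := by
    simpa [mul_comm] using ((hasDerivAt_id t).const_mul (-δ)).exp.fun_neg
  have hpoly : HasDerivAt (fun s => (δ * (1 + s) + 1) ^ 2 + 1)
      (2 * (δ * (1 + t) + 1) * δ) t := by
    have := ((((hasDerivAt_id t).const_add 1).const_mul δ).add_const 1).pow 2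
    simpa using this.add_const 1
  refine ((hexp.mul hpoly).div_const (δ ^ 3)).congr_deriv ?_
  field_simp
  ring

theorem expSqPrimitive_nonpos {δ : ℝ} (hδ : 0 < δ) (t : ℝ) : expSqPrimitive δ t ≤ 0 := by
  rw [expSqPrimitive, neg_mul, neg_div, neg_nonpos]
  positivity

noncomputable def growthFactor (κ δ t : ℝ) : ℝ :=
  exp (κ * (expSqPrimitive δ t - expSqPrimitive δ 0))

theorem hasDerivAt_growthFactor (κ : ℝ) {δ : ℝ} (hδ : δ ≠ 0) (t : ℝ) :
    HasDerivAt (growthFactor κ δ)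
      (κ * exp (-δ * t) * (1 + t) ^ 2 * growthFactor κ δ t) t := by
  have := ((((hasDerivAt_expSqPrimitive hδ t).sub_const (expSqPrimitive δ 0)).const_mul κ).exp)
  exact this.congr_deriv (by unfold growthFactor; ring)

theorem growthFactor_le {κ δ : ℝ} (hκ : 0 ≤ κ) (hδ : 0 < δ) (t : ℝ) :
    growthFactor κ δ t ≤ exp (-κ * expSqPrimitive δ 0) :=
  exp_le_exp.2 (by nlinarith [expSqPrimitive_nonpos hδ t])

structure CouplingODI (c δ : ℝ) (x y z x' y' z' : ℝ → ℝ) : Prop where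
  hasDerivWithinAt_x : ∀ t ∈ Ici (0:ℝ), HasDerivWithinAt x (x' t) (Ici 0) t
  hasDerivWithinAt_y : ∀ t ∈ Ici (0:ℝ), HasDerivWithinAt y (y' t) (Ici 0) t
  hasDerivWithinAt_z : ∀ t ∈ Ici (0:ℝ), HasDerivWithinAt z (z' t) (Ici 0) t
  deriv_x_le : ∀ t ∈ Ici (0:ℝ), x' t ≤ y t
  deriv_y_le : ∀ t ∈ Ici (0:ℝ), y' t ≤ c * exp (-δ * t) * (x t + y t) + c * z t
  deriv_z_le : ∀ t ∈ Ici (0:ℝ), z' t ≤ c * exp (-δ * t) * x t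

namespace CouplingODI

variable {c δ : ℝ} {x y z x' y' z' : ℝ → ℝ}

theorem deriv_lt_of_le_supersolution (h : CouplingODI c δ x y z x' y' z') (hc : 0 < c)
    {t F F' : ℝ} (ht : t ∈ Ici 0) (hF : 0 < F)
    (hF' : F' = 2 * c * (c + 1) * exp (-δ * t) * (1 + t) ^ 2 * F)
    (hx : x t ≤ (2 * c + 1) * (1 + t) ^ 2 * F) (hy : y t ≤ (2 * c + 1) * (1 + t) * F)
    (hz : z t ≤ F) :
    x' t < (2 * c + 1) * (2 * (1 + t) * F + (1 + t) ^ 2 * F') ∧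
      y' t < (2 * c + 1) * (F + (1 + t) * F') ∧ z' t < F' := by
  have hE := exp_pos (-δ * t)
  have hp : 1 ≤ 1 + t := le_add_of_nonneg_right ht
  have hF'pos : 0 < F' := hF' ▸ by positivity
  refine ⟨?_, ?_, ?_⟩
  · have : 0 < (2 * c + 1) * ((1 + t) * F + (1 + t) ^ 2 * F') := by positivity
    calc x' t ≤ y t := h.deriv_x_le t ht
      _ ≤ (2 * c + 1) * (1 + t) * F := hy
      _ < _ := by linarith
  · have hpow : (1 + t) ^ 2 + (1 + t) ≤ 2 * (c + 1) * (1 + t) ^ 3 := by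
      have h2 : (1 + t) ^ 2 ≤ (1 + t) ^ 3 := pow_le_pow_right₀ hp (by norm_num)
      have h1 : (1 + t) ^ 1 ≤ (1 + t) ^ 3 := pow_le_pow_right₀ hp (by norm_num)
      have : 0 ≤ c * (1 + t) ^ 3 := by positivity
      linarith
    have := mul_le_mul_of_nonneg_left hpow
      (by positivity : 0 ≤ c * (2 * c + 1) * exp (-δ * t) * F)
    calc y' t ≤ c * exp (-δ * t) * (x t + y t) + c * z t := h.deriv_y_le t ht
      _ ≤ c * exp (-δ * t) * ((2 * c + 1) * (1 + t) ^ 2 * F + (2 * c + 1) * (1 + t) * F)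
          + c * F := by gcongr
      _ < _ := by rw [hF']; nlinarith
  · have : 0 < c * exp (-δ * t) * (1 + t) ^ 2 * F := by positivity
    calc z' t ≤ c * exp (-δ * t) * x t := h.deriv_z_le t ht
      _ ≤ c * exp (-δ * t) * ((2 * c + 1) * (1 + t) ^ 2 * F) := by gcongr
      _ < F' := by rw [hF']; nlinarith

theorem le_supersolution (h : CouplingODI c δ x y z x' y' z') (hc : 0 < c) (hδ : δ ≠ 0)
    (hx0 : x 0 ≤ 1) (hy0 : y 0 ≤ 0) (hz0 : z 0 ≤ 0) :
    ∀ t ∈ Ici (0:ℝ),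
      x t ≤ (2 * c + 1) * (1 + t) ^ 2 * growthFactor (2 * c * (c + 1)) δ t ∧
      y t ≤ (2 * c + 1) * (1 + t) * growthFactor (2 * c * (c + 1)) δ t ∧
      z t ≤ growthFactor (2 * c * (c + 1)) δ t := by
  set F := growthFactor (2 * c * (c + 1)) δ
  set F' := fun t => 2 * c * (c + 1) * exp (-δ * t) * (1 + t) ^ 2 * F t
  have hF : ∀ t, HasDerivAt F (F' t) t := hasDerivAt_growthFactor _ hδ
  have hp : ∀ t, HasDerivAt (fun s => (1 + s : ℝ)) 1 t := fun t => (hasDerivAt_id t).const_add 1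
  have hxbar : ∀ t, HasDerivAt (fun t => (2 * c + 1) * (1 + t) ^ 2 * F t)
      ((2 * c + 1) * (2 * (1 + t) * F t + (1 + t) ^ 2 * F' t)) t := fun t =>
    ((((hp t).fun_pow 2).const_mul (2 * c + 1)).fun_mul (hF t)).congr_deriv (by ring)
  have hybar : ∀ t, HasDerivAt (fun t => (2 * c + 1) * (1 + t) * F t)
      ((2 * c + 1) * (F t + (1 + t) * F' t)) t := fun t =>
    (((hp t).const_mul (2 * c + 1)).fun_mul (hF t)).congr_deriv (by ring)
  have hcmp := image_le_of_deriv_lt_deriv_boundary_of_finite (a := 0)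
    (u := ![x, y, z]) (u' := ![x', y', z'])
    (v := ![fun t => (2 * c + 1) * (1 + t) ^ 2 * F t, fun t => (2 * c + 1) * (1 + t) * F t, F])
    (v' := ![fun t => (2 * c + 1) * (2 * (1 + t) * F t + (1 + t) ^ 2 * F' t),
      fun t => (2 * c + 1) * (F t + (1 + t) * F' t), F'])
    (fun i t ht => by
      fin_cases i
      exacts [h.hasDerivWithinAt_x t ht, h.hasDerivWithinAt_y t ht, h.hasDerivWithinAt_z t ht])
    (fun i t _ => by
      fin_cases i
      exacts [(hxbar t).hasDerivWithinAt, (hybar t).hasDerivWithinAt, (hF t).hasDerivWithinAt])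
    (fun i => by fin_cases i <;> simp [F, growthFactor] <;> linarith)
    (fun t ht hle i _ => by
      have hlt := h.deriv_lt_of_le_supersolution hc ht (exp_pos _) rfl (hle 0) (hle 1) (hle 2)
      fin_cases i
      exacts [hlt.1, hlt.2.1, hlt.2.2])
  exact fun t ht => ⟨hcmp t ht 0, hcmp t ht 1, hcmp t ht 2⟩

theorem exists_poly_bound (h : CouplingODI c δ x y z x' y' z') (hc : 0 < c) (hδ : 0 < δ)
    (hx0 : x 0 ≤ 1) (hy0 : y 0 ≤ 0) (hz0 : z 0 ≤ 0) :
    ∃ K, 0 < K ∧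
      ∀ t ∈ Ici (0:ℝ), x t ≤ K * (1 + t) ^ 2 ∧ y t ≤ K * (1 + t) ∧ z t ≤ K := by
  set M := exp (-(2 * c * (c + 1)) * expSqPrimitive δ 0)
  refine ⟨(2 * c + 1) * M, by positivity, fun t ht => ?_⟩
  obtain ⟨hx, hy, hz⟩ := h.le_supersolution hc hδ.ne' hx0 hy0 hz0 t ht
  have hF := growthFactor_le (by positivity : 0 ≤ 2 * c * (c + 1)) hδ t
  have ht0 : (0:ℝ) ≤ t := ht
  refine ⟨hx.trans ?_, hy.trans ?_, hz.trans ?_⟩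
  · calc _ ≤ (2 * c + 1) * (1 + t) ^ 2 * M := by gcongr
      _ = _ := by ring
  · calc _ ≤ (2 * c + 1) * (1 + t) * M := by gcongr
      _ = _ := by ring
  · calc _ ≤ M := hF
      _ ≤ _ := le_mul_of_one_le_left (by positivity) (by linarith)

theorem y_le_mul (h : CouplingODI c δ x y z x' y' z') (hc : 0 ≤ c) (hδ : 0 ≤ δ)
    (hy0 : y 0 ≤ 0) {K : ℝ} (hK0 : 0 ≤ K)
    (hK : ∀ t ∈ Ici (0:ℝ), x t ≤ K * (1 + t) ^ 2 ∧ y t ≤ K * (1 + t) ∧ z t ≤ K) :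
    ∀ t ∈ Ici (0:ℝ), y t ≤ (7 * c + 2) * K * t := by
  intro t ht
  have ht0 : (0:ℝ) ≤ t := ht
  rcases le_total t 1 with ht1 | ht1
  · have hsmall : y t ≤ 7 * c * K * t := by
      refine le_of_hasDerivWithinAt_Ici_of_deriv_le h.hasDerivWithinAt_y
        (fun s => ((hasDerivAt_id s).const_mul (7 * c * K)).congr_deriv (mul_one _))
        (by simpa using hy0) (fun s hs => ?_) ht0
      obtain ⟨hxs, hys, hzs⟩ := hK s hs.1
      have hs0 : 0 ≤ s := hs.1
      have hs1 : s ≤ 1 := hs.2.le.trans ht1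
      have hE : exp (-δ * s) ≤ 1 := exp_le_one_iff.2 (by nlinarith)
      calc y' s ≤ c * exp (-δ * s) * (x s + y s) + c * z s := h.deriv_y_le s hs.1
        _ ≤ c * exp (-δ * s) * (6 * K) + c * K := by
          gcongr
          have h4 : (1 + s) ^ 2 ≤ 4 := by nlinarith
          nlinarith [mul_le_mul_of_nonneg_left h4 hK0]
        _ ≤ c * 1 * (6 * K) + c * K := by gcongr
        _ = 7 * c * K := by ring
    nlinarith [mul_nonneg (mul_nonneg hc hK0) ht0]
  · nlinarith [(hK t ht).2.1, mul_nonneg (mul_nonneg hc hK0) ht0]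

theorem z_le_mul_min (h : CouplingODI c δ x y z x' y' z') (hc : 0 ≤ c) (hδ : 0 ≤ δ)
    (hz0 : z 0 ≤ 0) {K : ℝ} (hK0 : 0 ≤ K)
    (hK : ∀ t ∈ Ici (0:ℝ), x t ≤ K * (1 + t) ^ 2 ∧ y t ≤ K * (1 + t) ∧ z t ≤ K) :
    ∀ t ∈ Ici (0:ℝ), z t ≤ (4 * c + 1) * K * min 1 t := by
  intro t ht
  have ht0 : (0:ℝ) ≤ t := ht
  rcases le_total t 1 with ht1 | ht1
  · have hsmall : z t ≤ 4 * c * K * t := by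
      refine le_of_hasDerivWithinAt_Ici_of_deriv_le h.hasDerivWithinAt_z
        (fun s => ((hasDerivAt_id s).const_mul (4 * c * K)).congr_deriv (mul_one _))
        (by simpa using hz0) (fun s hs => ?_) ht0
      have hs0 : 0 ≤ s := hs.1
      have hE : exp (-δ * s) ≤ 1 := exp_le_one_iff.2 (by nlinarith)
      have h4 : (1 + s) ^ 2 ≤ 4 := by nlinarith [hs.2.le.trans ht1]
      calc z' s ≤ c * exp (-δ * s) * x s := h.deriv_z_le s hs.1
        _ ≤ c * exp (-δ * s) * (4 * K) := by
          gcongr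
          nlinarith [(hK s hs.1).1, mul_le_mul_of_nonneg_left h4 hK0]
        _ ≤ c * 1 * (4 * K) := by gcongr
        _ = 4 * c * K := by ring
    rw [min_eq_right ht1]
    nlinarith [mul_nonneg hK0 ht0]
  · rw [min_eq_left ht1]
    nlinarith [(hK t ht).2.2, mul_nonneg hc hK0]

theorem x_le_one_add (h : CouplingODI c δ x y z x' y' z') (hx0 : x 0 ≤ 1) {C : ℝ}
    (hy : ∀ t ∈ Ici (0:ℝ), y t ≤ C * t) :
    ∀ t ∈ Ici (0:ℝ), x t ≤ 1 + C / 2 * t ^ 2 := fun t ht =>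
  le_of_hasDerivWithinAt_Ici_of_deriv_le h.hasDerivWithinAt_x
    (fun s => (((hasDerivAt_pow 2 s).const_mul (C / 2)).const_add 1).congr_deriv (by ring))
    (by simpa using hx0) (fun s hs => (h.deriv_x_le s hs.1).trans (hy s hs.1)) ht

end CouplingODI

theorem stmt_4_general (c δ : ℝ) (hc : 0 < c) (hδ : 0 < δ) (x y z x' y' z' : ℝ → ℝ)
    (hxd : ∀ t ∈ Ici (0:ℝ), HasDerivWithinAt x (x' t) (Ici 0) t)
    (hyd : ∀ t ∈ Ici (0:ℝ), HasDerivWithinAt y (y' t) (Ici 0) t)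
    (hzd : ∀ t ∈ Ici (0:ℝ), HasDerivWithinAt z (z' t) (Ici 0) t)
    (hx0 : x 0 = 1) (hy0 : y 0 = 0) (hz0 : z 0 = 0)
    (hx' : ∀ t ∈ Ici (0:ℝ), x' t ≤ y t)
    (hy' : ∀ t ∈ Ici (0:ℝ), y' t ≤ c * Real.exp (-δ * t) * (x t + y t) + c * z t)
    (hz' : ∀ t ∈ Ici (0:ℝ), z' t ≤ c * Real.exp (-δ * t) * x t) :
    ∃ C : ℝ, 0 < C ∧ ∀ t ∈ Ici (0:ℝ),
      x t ≤ 1 + C * t ^ 2 ∧ y t ≤ C * t ∧ z t ≤ C * min 1 t := by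
  have h : CouplingODI c δ x y z x' y' z' := ⟨hxd, hyd, hzd, hx', hy', hz'⟩
  obtain ⟨K, hK0, hK⟩ := h.exists_poly_bound hc hδ hx0.le hy0.le hz0.le
  have hy := h.y_le_mul hc.le hδ.le hy0.le hK0.le hK
  refine ⟨(7 * c + 2) * K, by positivity, fun t ht => ⟨?_, hy t ht, ?_⟩⟩
  · calc x t ≤ 1 + (7 * c + 2) * K / 2 * t ^ 2 := h.x_le_one_add hx0.le hy t ht
      _ ≤ 1 + (7 * c + 2) * K * t ^ 2 := by gcongr; exact half_le_self (by positivity)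
  · have hmin : 0 ≤ min 1 t := le_min zero_le_one ht
    calc z t ≤ (4 * c + 1) * K * min 1 t := h.z_le_mul_min hc.le hδ.le hz0.le hK0.le hK t ht
      _ ≤ (7 * c + 2) * K * min 1 t := by gcongr <;> linarith

theorem stmt_4 (c δ : ℝ) (hc : 0 < c) (hδ : 0 < δ) (x y z x' y' z' : ℝ → ℝ)
    (hxd : ∀ t ∈ Ici (0:ℝ), HasDerivWithinAt x (x' t) (Ici 0) t)
    (hyd : ∀ t ∈ Ici (0:ℝ), HasDerivWithinAt y (y' t) (Ici 0) t)
    (hzd : ∀ t ∈ Ici (0:ℝ), HasDerivWithinAt z (z' t) (Ici 0) t)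
    (hx'c : ContinuousOn x' (Ici 0)) (hy'c : ContinuousOn y' (Ici 0))
    (hz'c : ContinuousOn z' (Ici 0))
    (hxnn : ∀ t ∈ Ici (0:ℝ), 0 ≤ x t) (hynn : ∀ t ∈ Ici (0:ℝ), 0 ≤ y t)
    (hznn : ∀ t ∈ Ici (0:ℝ), 0 ≤ z t)
    (hx0 : x 0 = 1) (hy0 : y 0 = 0) (hz0 : z 0 = 0)
    (hx' : ∀ t ∈ Ici (0:ℝ), x' t ≤ y t)
    (hy' : ∀ t ∈ Ici (0:ℝ), y' t ≤ c * Real.exp (-δ * t) * (x t + y t) + c * z t)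
    (hz' : ∀ t ∈ Ici (0:ℝ), z' t ≤ c * Real.exp (-δ * t) * x t) :
    ∃ C : ℝ, 0 < C ∧ ∀ t ∈ Ici (0:ℝ),
      x t ≤ 1 + C * t ^ 2 ∧ y t ≤ C * t ∧ z t ≤ C * min 1 t :=
  stmt_4_general c δ hc hδ x y z x' y' z' hxd hyd hzd hx0 hy0 hz0 hx' hy' hz'
end

section
/- Let u, v ∈ ℝ^n be nonzero vectors and let Π be a 2-dimensional subspace of ℝ^n containing the vector u/‖u‖ - v/‖v‖ (assume u/‖u‖ ≠ v/‖v‖). Let u^Π, v^Π denote the orthogonal projections of u, v onto Π, and assume they are nonzero. Then 1 - cos∠(u,v) ≤ 1 - cos∠(u^Π, v^Π), i.e. the angle between the projections is at least the angle between the original vectors. -/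
/-!
Write `x̃ = x / ‖x‖` and `Π` for the orthogonal projection onto `P`. Since `ũ - ṽ ∈ P`, projecting
does not move it: `ũ - ṽ = Π ũ - Π ṽ`, and by Pythagoras `‖Π ũ‖ = ‖Π ṽ‖ ≤ 1`. The law of cosines for
two vectors of equal length then gives
`2 (1 - cos ∠(u, v)) = ‖ũ - ṽ‖² = ‖Π ũ - Π ṽ‖² = 2 ‖Π ũ‖² (1 - cos ∠(Π u, Π v)) ≤ 2 (1 - cos ∠(Π u, Π v))`.
-/

open InnerProductGeometry

namespace InnerProductGeometry

variable {V : Type*} [NormedAddCommGroup V] [InnerProductSpace ℝ V]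

theorem norm_sub_sq_eq_of_norm_eq {x y : V} (h : ‖x‖ = ‖y‖) :
    ‖x - y‖ ^ 2 = 2 * ‖x‖ ^ 2 * (1 - Real.cos (angle x y)) := by
  have := norm_sub_sq_eq_norm_sq_add_norm_sq_sub_two_mul_norm_mul_norm_mul_cos_angle x y
  rw [← h] at this
  linear_combination this

end InnerProductGeometry

namespace Submodule

variable {V : Type*} [NormedAddCommGroup V] [InnerProductSpace ℝ V]
  (K : Submodule ℝ V) [K.HasOrthogonalProjection]

theorem starProjection_sub_eq_of_sub_mem {x y : V} (hxy : x - y ∈ K) :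
    K.starProjection x - K.starProjection y = x - y := by
  rw [← map_sub, starProjection_eq_self_iff.mpr hxy]

theorem norm_starProjection_eq_of_sub_mem {x y : V} (hxy : x - y ∈ K) (h : ‖x‖ = ‖y‖) :
    ‖K.starProjection x‖ = ‖K.starProjection y‖ := by
  have horth : Kᗮ.starProjection x = Kᗮ.starProjection y := by
    rw [← sub_eq_zero, ← map_sub]
    exact starProjection_orthogonal_apply_eq_zero hxy
  have hx := norm_sq_eq_add_norm_sq_starProjection x K
  have hy := norm_sq_eq_add_norm_sq_starProjection y K
  rw [h, hy, horth, add_left_inj] at hx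
  exact (sq_eq_sq₀ (norm_nonneg _) (norm_nonneg _)).mp hx.symm

theorem one_sub_cos_angle_le_starProjection_of_sub_mem {x y : V} (hxy : x - y ∈ K)
    (h : ‖x‖ = ‖y‖) :
    1 - Real.cos (angle x y) ≤
      1 - Real.cos (angle (K.starProjection x) (K.starProjection y)) := by
  rcases eq_or_ne x 0 with rfl | hx
  · rw [norm_zero, eq_comm, norm_eq_zero] at h
    simp [h]
  have hproj := norm_starProjection_eq_of_sub_mem K hxy h
  have hcos := norm_sub_sq_eq_of_norm_eq h
  rw [← K.starProjection_sub_eq_of_sub_mem hxy, norm_sub_sq_eq_of_norm_eq hproj] at hcos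
  refine le_of_mul_le_mul_left ?_ (by positivity : 0 < 2 * ‖x‖ ^ 2)
  calc 2 * ‖x‖ ^ 2 * (1 - Real.cos (angle x y))
      = 2 * ‖K.starProjection x‖ ^ 2 *
          (1 - Real.cos (angle (K.starProjection x) (K.starProjection y))) := hcos.symm
    _ ≤ 2 * ‖x‖ ^ 2 * (1 - Real.cos (angle (K.starProjection x) (K.starProjection y))) := by
      gcongr
      · linarith [Real.cos_le_one (angle (K.starProjection x) (K.starProjection y))]
      · exact K.norm_starProjection_apply_le x

end Submodule

theorem stmt_8_general (n : ℕ) (u v : EuclideanSpace ℝ (Fin n))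
    (hu : u ≠ 0) (hv : v ≠ 0)
    (P : Submodule ℝ (EuclideanSpace ℝ (Fin n)))
    (hmem : ‖u‖⁻¹ • u - ‖v‖⁻¹ • v ∈ P) :
    1 - Real.cos (angle u v) ≤
      1 - Real.cos (angle (Submodule.orthogonalProjectionOnto P u : EuclideanSpace ℝ (Fin n))
        (Submodule.orthogonalProjectionOnto P v : EuclideanSpace ℝ (Fin n))) := by
  have hu' : 0 < ‖u‖⁻¹ := inv_pos.mpr (norm_pos_iff.mpr hu)
  have hv' : 0 < ‖v‖⁻¹ := inv_pos.mpr (norm_pos_iff.mpr hv)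
  have key := P.one_sub_cos_angle_le_starProjection_of_sub_mem hmem
    (by simp [norm_smul, hu, hv])
  simpa only [map_smul, angle_smul_left_of_pos _ _ hu', angle_smul_right_of_pos _ _ hv',
    Submodule.starProjection_apply] using key

theorem stmt_8 (n : ℕ) (u v : EuclideanSpace ℝ (Fin n))
    (hu : u ≠ 0) (hv : v ≠ 0)
    (P : Submodule ℝ (EuclideanSpace ℝ (Fin n)))
    (hP : Module.finrank ℝ P = 2)
    (hne : ‖u‖⁻¹ • u ≠ ‖v‖⁻¹ • v)
    (hmem : ‖u‖⁻¹ • u - ‖v‖⁻¹ • v ∈ P)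
    (huP : (Submodule.orthogonalProjectionOnto P u : EuclideanSpace ℝ (Fin n)) ≠ 0)
    (hvP : (Submodule.orthogonalProjectionOnto P v : EuclideanSpace ℝ (Fin n)) ≠ 0) :
    1 - Real.cos (angle u v) ≤
      1 - Real.cos (angle (Submodule.orthogonalProjectionOnto P u : EuclideanSpace ℝ (Fin n))
        (Submodule.orthogonalProjectionOnto P v : EuclideanSpace ℝ (Fin n))) :=
  stmt_8_general n u v hu hv P hmem
end

section
/- Let N ≥ k ≥ 1 and let Φ, Φ̄ : E → (ℝ^d)^N be measurable maps on a probability space (E, μ) whose laws are symmetric under permutations of the N coordinates, with k-th marginals μ^{(k)} and ν^{(k)} = ν^{⊗k} respectively (ν the common 1-coordinate law of Φ̄, whose coordinates are assumed exchangeable with product law). Then 𝒲₂²(μ^{(k)}, ν^{⊗k}) ≤ (k/N)·∫_E ∑_{i=1}^N |Φ_i - Φ̄_i|² dμ. -/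
open MeasureTheory Finset

/-- Squared Wasserstein-2 distance, defined as the infimum of `∫ dist(a,b)²`
over all couplings of `μ` and `ν`. -/
noncomputable def wasserstein2Sq {α : Type*} [MeasurableSpace α] [PseudoMetricSpace α]
    (μ ν : Measure α) : ℝ :=
  sInf { r : ℝ | ∃ π : Measure (α × α), IsProbabilityMeasure π ∧
    π.map Prod.fst = μ ∧ π.map Prod.snd = ν ∧
    r = ∫ p, dist p.1 p.2 ^ 2 ∂π }

/-!
For a permutation `σ` of the `N` coordinates, selecting the coordinates `σ 0, …, σ (k-1)` of `Φ`
and of `Φb` gives, by exchangeability, a coupling of `μ^(k)` and `ν^⊗k` whose cost is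
`∑_{j<k} ∫ ‖Φ_{σ j} - Φb_{σ j}‖²`. Averaged over all `σ`, every coordinate is selected with
frequency `k / N`, so some `σ` has cost at most `(k / N) ∫ ∑_i ‖Φ_i - Φb_i‖²`.
-/

open Equiv

theorem wasserstein2Sq_map_le_integral_dist_sq {Ω α : Type*} [MeasurableSpace Ω]
    [PseudoMetricSpace α] [MeasurableSpace α] [BorelSpace α] [SecondCountableTopology α]
    {μ : Measure Ω} [IsProbabilityMeasure μ] {X Y : Ω → α} (hX : Measurable X)
    (hY : Measurable Y) :
    wasserstein2Sq (μ.map X) (μ.map Y) ≤ ∫ ω, dist (X ω) (Y ω) ^ 2 ∂μ := by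
  have hXY : Measurable fun ω => (X ω, Y ω) := hX.prodMk hY
  refine csInf_le ⟨0, ?_⟩ ⟨μ.map fun ω => (X ω, Y ω),
    Measure.isProbabilityMeasure_map hXY.aemeasurable, ?_, ?_, ?_⟩
  · rintro r ⟨π, -, -, -, rfl⟩
    exact integral_nonneg fun p => by positivity
  · rw [Measure.map_map measurable_fst hXY]; rfl
  · rw [Measure.map_map measurable_snd hXY]; rfl
  · exact (integral_map hXY.aemeasurable (measurable_dist.pow_const 2).aestronglyMeasurable).symm

theorem Equiv.Perm.sum_apply_eq_sum_apply {ι M : Type*} [Fintype ι] [DecidableEq ι]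
    [AddCommMonoid M] (c : ι → M) (i i' : ι) :
    ∑ σ : Perm ι, c (σ i) = ∑ σ : Perm ι, c (σ i') :=
  Fintype.sum_equiv (Equiv.mulRight (swap i' i)) _ _ fun σ => by simp [Perm.mul_apply]

theorem Equiv.Perm.card_nsmul_sum_apply {ι M : Type*} [Fintype ι] [DecidableEq ι]
    [AddCommMonoid M] (c : ι → M) (i : ι) :
    Fintype.card ι • ∑ σ : Perm ι, c (σ i) = Fintype.card (Perm ι) • ∑ i, c i :=
  calc Fintype.card ι • ∑ σ : Perm ι, c (σ i) = ∑ i' : ι, ∑ σ : Perm ι, c (σ i') := by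
        rw [← Finset.card_univ, ← Finset.sum_const]
        exact Finset.sum_congr rfl fun i' _ => Perm.sum_apply_eq_sum_apply c i i'
    _ = ∑ σ : Perm ι, ∑ i', c (σ i') := Finset.sum_comm
    _ = ∑ _σ : Perm ι, ∑ i, c i := by simp_rw [Equiv.sum_comp]
    _ = Fintype.card (Perm ι) • ∑ i, c i := by rw [Finset.sum_const, Finset.card_univ]

theorem Equiv.Perm.exists_sum_apply_comp_le {ι κ : Type*} [Fintype ι] [DecidableEq ι]
    [Fintype κ] (c : ι → ℝ) (f : κ → ι) :
    ∃ σ : Perm ι, ∑ j, c (σ (f j)) ≤ (Fintype.card κ / Fintype.card ι : ℝ) * ∑ i, c i := by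
  have hmean (j : κ) :
      ∑ σ : Perm ι, c (σ (f j)) = Fintype.card (Perm ι) / Fintype.card ι * ∑ i, c i := by
    have : (Fintype.card ι : ℝ) ≠ 0 := by
      have : Nonempty ι := ⟨f j⟩
      positivity
    have h := Perm.card_nsmul_sum_apply c (f j)
    rw [nsmul_eq_mul, nsmul_eq_mul] at h
    field_simp
    linear_combination h
  have hsum : ∑ σ : Perm ι, ∑ j, c (σ (f j))
      = ∑ _σ : Perm ι, (Fintype.card κ / Fintype.card ι : ℝ) * ∑ i, c i := by
    rw [Finset.sum_comm, Finset.sum_congr rfl fun j _ => hmean j]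
    simp only [Finset.sum_const, Finset.card_univ, nsmul_eq_mul]
    ring
  obtain ⟨σ, -, hσ⟩ := Finset.exists_le_of_sum_le Finset.univ_nonempty hsum.le
  exact ⟨σ, hσ⟩

theorem MeasureTheory.Integrable.of_finsetSum_of_nonneg {Ω β : Type*} [MeasurableSpace Ω]
    {μ : Measure Ω} {F : β → Ω → ℝ} {s : Finset β} {j : β}
    (hs : Integrable (fun ω => ∑ j ∈ s, F j ω) μ) (hF₀ : ∀ j ∈ s, ∀ ω, 0 ≤ F j ω)
    (hj : j ∈ s) (hF : AEStronglyMeasurable (F j) μ) : Integrable (F j) μ :=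
  hs.mono' hF <| ae_of_all _ fun ω => by
    rw [Real.norm_of_nonneg (hF₀ j hj ω)]
    exact Finset.single_le_sum (fun j hj => hF₀ j hj ω) hj

theorem exists_perm_integral_sum_comp_le {Ω ι κ : Type*} [MeasurableSpace Ω] {μ : Measure Ω}
    [Fintype ι] [DecidableEq ι] [Fintype κ] [Nonempty κ] {G : ι → Ω → ℝ}
    (hG : ∀ i, AEStronglyMeasurable (G i) μ) (hG₀ : ∀ i ω, 0 ≤ G i ω) (f : κ → ι) :
    ∃ σ : Perm ι, ∫ ω, ∑ j, G (σ (f j)) ω ∂μ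
      ≤ (Fintype.card κ / Fintype.card ι : ℝ) * ∫ ω, ∑ i, G i ω ∂μ := by
  by_cases hint : ∀ i, Integrable (G i) μ
  · obtain ⟨σ, hσ⟩ := Perm.exists_sum_apply_comp_le (fun i => ∫ ω, G i ω ∂μ) f
    refine ⟨σ, ?_⟩
    rwa [integral_finsetSum _ fun j _ => hint _, integral_finsetSum _ fun i _ => hint i]
  · push Not at hint
    obtain ⟨i, hi⟩ := hint
    obtain ⟨j₀⟩ := ‹Nonempty κ›
    -- both integrals are junk zeros: the swap moves a non-integrable coordinate into the selection
    refine ⟨swap (f j₀) i, le_of_eq ?_⟩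
    rw [integral_undef fun h => hi (h.of_finsetSum_of_nonneg (fun i _ => hG₀ i)
        (Finset.mem_univ i) (hG i)), mul_zero]
    refine integral_undef fun h => hi ?_
    simpa using h.of_finsetSum_of_nonneg (fun j _ => hG₀ _) (Finset.mem_univ j₀) (hG _)

theorem stmt_18 {E : Type*} [MeasurableSpace E] (μ : Measure E) [IsProbabilityMeasure μ]
    (d N k : ℕ) (hk : 1 ≤ k) (hkN : k ≤ N)
    (Φ Φb : E → Fin N → EuclideanSpace ℝ (Fin d))
    (hΦ : Measurable Φ) (hΦb : Measurable Φb)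
    -- the laws of Φ and Φb are symmetric under permutations of the N coordinates
    (hsymΦ : ∀ σ : Equiv.Perm (Fin N), μ.map (fun e => Φ e ∘ σ) = μ.map Φ)
    (hsymΦb : ∀ σ : Equiv.Perm (Fin N), μ.map (fun e => Φb e ∘ σ) = μ.map Φb)
    -- the coordinates of Φb are i.i.d. with common law ν : its k-th marginal is ν^{⊗k}
    (ν : Measure (EuclideanSpace ℝ (Fin d)))
    (hΦb_prod : μ.map (fun e => (WithLp.toLp 2 (fun i : Fin k => Φb e (Fin.castLE hkN i)) :
        PiLp 2 fun _ : Fin k => EuclideanSpace ℝ (Fin d)))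
      = (Measure.pi fun _ : Fin k => ν).map (WithLp.toLp 2)) :
    wasserstein2Sq
        (μ.map (fun e => (WithLp.toLp 2 (fun i : Fin k => Φ e (Fin.castLE hkN i)) :
          PiLp 2 fun _ : Fin k => EuclideanSpace ℝ (Fin d))))
        ((Measure.pi fun _ : Fin k => ν).map (WithLp.toLp 2))
      ≤ (k / N : ℝ) * ∫ e, ∑ i, ‖Φ e i - Φb e i‖ ^ 2 ∂μ := by
  have : Nonempty (Fin k) := ⟨⟨0, hk⟩⟩
  obtain ⟨σ, hσ⟩ := exists_perm_integral_sum_comp_le (μ := μ)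
    (G := fun i e => ‖Φ e i - Φb e i‖ ^ 2)
    (fun i => ((hΦ.eval.sub hΦb.eval).norm.pow_const 2).aestronglyMeasurable)
    (fun _ _ => by positivity) (Fin.castLE hkN)
  let select (x : Fin N → EuclideanSpace ℝ (Fin d)) :
      PiLp 2 fun _ : Fin k => EuclideanSpace ℝ (Fin d) :=
    WithLp.toLp 2 fun j => x (Fin.castLE hkN j)
  have hselect : Measurable select := by fun_prop
  have hmarginal {Ψ : E → Fin N → EuclideanSpace ℝ (Fin d)} (hΨ : Measurable Ψ)
      (hsym : μ.map (fun e => Ψ e ∘ σ) = μ.map Ψ) :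
      μ.map (fun e => select (Ψ e ∘ σ)) = μ.map (fun e => select (Ψ e)) := by
    have hΨσ : Measurable fun e => Ψ e ∘ σ := by fun_prop
    calc μ.map (fun e => select (Ψ e ∘ σ)) = (μ.map fun e => Ψ e ∘ σ).map select :=
          (Measure.map_map hselect hΨσ).symm
      _ = μ.map (fun e => select (Ψ e)) := by rw [hsym, Measure.map_map hselect hΨ]; rfl
  calc wasserstein2Sq _ _
      = wasserstein2Sq (μ.map fun e => select (Φ e ∘ σ)) (μ.map fun e => select (Φb e ∘ σ)) := by
        rw [hmarginal hΦ (hsymΦ σ), hmarginal hΦb (hsymΦb σ), ← hΦb_prod]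
    _ ≤ ∫ e, dist (select (Φ e ∘ σ)) (select (Φb e ∘ σ)) ^ 2 ∂μ :=
        wasserstein2Sq_map_le_integral_dist_sq (by fun_prop) (by fun_prop)
    _ = ∫ e, ∑ j, ‖Φ e (σ (Fin.castLE hkN j)) - Φb e (σ (Fin.castLE hkN j))‖ ^ 2 ∂μ := by
        simp only [PiLp.dist_sq_eq_of_L2 (β := fun _ : Fin k => EuclideanSpace ℝ (Fin d))]
        simp only [select, Function.comp_apply, dist_eq_norm]
    _ ≤ (k / N : ℝ) * ∫ e, ∑ i, ‖Φ e i - Φb e i‖ ^ 2 ∂μ := by simpa using hσ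
end
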